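/- Let P be a finite poset, 2-wide, parity-graded with parity rank function μ, and downward Eulerian, and let g : P → ℝ be an injective discrete Morse function such that whenever z < x ≺ y < w and g(x) < g(y), then g(z) < g(y) and g(x) < g(w). For each b ∈ P, let T(b) be the set of nonempty chains C of P containing b on which g attains its maximum at b. If b is critical for g, then Σ_{C ∈ T(b)} (−1)^{ℓ(C)} = (−1)^{μ(b)}. -/

import Mathlib

open Finset
open scoped Classical

variable {P : Type*}

/-- `P` is 2-wide: whenever `a ⋖ b ⋖ c` there is `d ≠ b` with `a ⋖ d ⋖ c`. -/
def TwoWide (P : Type*) [PartialOrder P] : Prop :=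
  ∀ a b c : P, a ⋖ b → b ⋖ c → ∃ d, d ≠ b ∧ a ⋖ d ∧ d ⋖ c

/-- `f` is a discrete Morse function. -/
def IsDMF [PartialOrder P] (f : P → ℝ) : Prop :=
  ∀ b : P, {a | a ⋖ b ∧ f b ≤ f a}.Subsingleton ∧ {c | b ⋖ c ∧ f c ≤ f b}.Subsingleton

/-- `b` is (discrete-)critical for `f`. -/
def IsCrit [PartialOrder P] (f : P → ℝ) (b : P) : Prop :=
  (∀ a, a ⋖ b → f a < f b) ∧ (∀ c, b ⋖ c → f b < f c)

/-- `μ` is a parity rank function. -/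
def ParityRank [PartialOrder P] (μ : P → ℕ) : Prop :=
  (∀ a, μ a ≤ 1) ∧ (∀ a, IsMin a → μ a = 0) ∧ ∀ a b : P, a ⋖ b → μ b = 1 - μ a

/-- Sum of `(-1)^(length C)` over all nonempty chains `C` of `P` satisfying `p`. -/
noncomputable def chainSum [PartialOrder P] [Fintype P] (p : Finset P → Prop) : ℤ :=
  ∑ C ∈ Finset.univ.filter
      (fun C : Finset P => C.Nonempty ∧ IsChain (· ≤ ·) (↑C : Set P) ∧ p C),
    (-1 : ℤ) ^ (C.card - 1)

/-- `P` is downward Eulerian with respect to `μ`. -/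
def DownEulerian [PartialOrder P] [Fintype P] (μ : P → ℕ) : Prop :=
  ∀ a : P, ¬ IsMin a →
    chainSum (fun C => ∀ x ∈ C, x < a) = (-1 : ℤ) ^ (μ a + 1) + 1

/-!
Using 2-wideness, an induction along coverings shows that a critical `b` is a strict extremum
in the order sense: `g x < g b` for `x < b` and `g b < g w` for `b < w`. So the chains on which
`g` peaks at `b` are exactly the chains with maximum `b`, i.e. `b` adjoined to a possibly empty
chain below `b`, and their signed count is `1 - Σ` over the nonempty chains below `b`, which the
Eulerian condition (or, for minimal `b`, the absence of such chains) turns into `(-1) ^ μ b`.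
-/

section Morse

open OrderDual

variable [PartialOrder P] {g : P → ℝ} {b : P}

lemma TwoWide.dual (hw : TwoWide P) : TwoWide Pᵒᵈ := fun a b c hab hbc =>
  let ⟨d, hdb, hcd, hda⟩ := hw (ofDual c) (ofDual b) (ofDual a) hbc.ofDual hab.ofDual
  ⟨toDual d, hdb, hda.toDual, hcd.toDual⟩

lemma IsDMF.dual (hg : IsDMF g) : IsDMF fun x : Pᵒᵈ => -g (ofDual x) := fun b =>
  ⟨fun _ hx _ hy => (hg (ofDual b)).2 ⟨hx.1.ofDual, neg_le_neg_iff.mp hx.2⟩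
      ⟨hy.1.ofDual, neg_le_neg_iff.mp hy.2⟩,
    fun _ hx _ hy => (hg (ofDual b)).1 ⟨hx.1.ofDual, neg_le_neg_iff.mp hx.2⟩
      ⟨hy.1.ofDual, neg_le_neg_iff.mp hy.2⟩⟩

variable [WellFoundedLT P] [WellFoundedGT P]

theorem IsDMF.apply_lt_apply_of_lt (hw : TwoWide P) (hg : IsDMF g)
    (hb : ∀ c, b ⋖ c → g b < g c) {w : P} (hbw : b < w) : g b < g w := by
  induction w using WellFoundedLT.induction with
  | _ w ih =>
    obtain ⟨c, hbc, hcw⟩ := exists_le_covBy_of_lt hbw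
    obtain rfl | hbc := hbc.eq_or_lt
    · exact hb w hcw
    -- Otherwise `c` and the second lower cover `d` of `w` given by 2-wideness would both have
    -- `g`-values above `g w`, which the Morse condition forbids.
    by_contra! hwb
    obtain ⟨e, hbe, hec⟩ := exists_le_covBy_of_lt hbc
    obtain ⟨d, hdc, hed, hdw⟩ := hw e c w hec hcw
    have hgc := ih c hcw.lt hbc
    have hgd := ih d hdw.lt (hbe.trans_lt hed.lt)
    exact hdc ((hg w).1 ⟨hdw, hwb.trans hgd.le⟩ ⟨hcw, hwb.trans hgc.le⟩)

theorem IsDMF.apply_lt_apply_of_gt (hw : TwoWide P) (hg : IsDMF g)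
    (hb : ∀ a, a ⋖ b → g a < g b) {x : P} (hxb : x < b) : g x < g b :=
  neg_lt_neg_iff.mp <| hg.dual.apply_lt_apply_of_lt hw.dual (b := toDual b)
    (fun _ hc => neg_lt_neg (hb _ hc.ofDual)) (w := toDual x) hxb

theorem IsCrit.apply_le_iff_le (hw : TwoWide P) (hg : IsDMF g) (hb : IsCrit g b) {x : P}
    (hx : x ≤ b ∨ b ≤ x) : g x ≤ g b ↔ x ≤ b := by
  rcases hx with hxb | hbx
  · refine iff_of_true ?_ hxb
    obtain rfl | hxb := hxb.eq_or_lt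
    · rfl
    · exact (hg.apply_lt_apply_of_gt hw hb.1 hxb).le
  · obtain rfl | hbx := hbx.eq_or_lt
    · simp
    · exact iff_of_false (hg.apply_lt_apply_of_lt hw hb.2 hbx).not_ge hbx.not_ge

end Morse

section ChainSum

variable [PartialOrder P] [Fintype P]

lemma chainSum_congr {p q : Finset P → Prop}
    (h : ∀ C : Finset P, C.Nonempty → IsChain (· ≤ ·) (C : Set P) → (p C ↔ q C)) :
    chainSum p = chainSum q :=
  sum_congr (filter_congr fun C _ => and_congr_right fun hne =>
    and_congr_right fun hC => h C hne hC) fun _ _ => rfl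

lemma chainSum_eq_zero {p : Finset P → Prop}
    (h : ∀ C : Finset P, C.Nonempty → IsChain (· ≤ ·) (C : Set P) → ¬ p C) :
    chainSum p = 0 :=
  sum_eq_zero fun C hC => by
    simp only [mem_filter] at hC
    exact absurd hC.2.2.2 (h C hC.2.1 hC.2.2.1)

lemma chainSum_mem_and_forall_le (b : P) :
    chainSum (fun C => b ∈ C ∧ ∀ x ∈ C, x ≤ b) =
      1 - chainSum (fun C => ∀ x ∈ C, x < b) := by
  set D := univ.filter fun C : Finset P => IsChain (· ≤ ·) (C : Set P) ∧ ∀ x ∈ C, x < b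
  have hbD : ∀ C ∈ D, b ∉ C := fun C hC hb => lt_irrefl b ((mem_filter.1 hC).2.2 b hb)
  calc chainSum (fun C => b ∈ C ∧ ∀ x ∈ C, x ≤ b)
      = ∑ C ∈ D, (-1 : ℤ) ^ C.card := by
        refine sum_nbij' (·.erase b) (insert b) (fun C hC => ?_) (fun C hC => ?_)
          (fun C hC => ?_) (fun C hC => erase_insert (hbD C hC)) (fun C hC => ?_) <;>
          simp only [D, mem_filter, mem_univ, true_and] at hC
        · simp only [mem_filter, mem_univ, true_and, D]
          obtain ⟨-, hC, -, hle⟩ := hC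
          exact ⟨hC.mono (by simp), fun x hx =>
            (hle x (mem_of_mem_erase hx)).lt_of_ne (ne_of_mem_erase hx)⟩
        · simp only [mem_filter, mem_univ, true_and]
          refine ⟨insert_nonempty b C, ?_, mem_insert_self b C, ?_⟩
          · rw [coe_insert]
            exact hC.1.insert fun y hy _ => Or.inr (hC.2 y hy).le
          · simpa [or_imp, forall_and] using fun x hx => (hC.2 x hx).le
        · exact insert_erase hC.2.2.1
        · rw [card_erase_of_mem hC.2.2.1]
    _ = 1 - chainSum (fun C => ∀ x ∈ C, x < b) := by
        -- the empty chain contributes the `1`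
        rw [← add_sum_erase D _ (show ∅ ∈ D by simp [D]), chainSum, sub_eq_add_neg,
          ← sum_neg_distrib]
        congr 1
        refine sum_congr ?_ fun C hC => ?_
        · ext C
          simp [D, nonempty_iff_ne_empty]
        simp only [mem_filter, mem_univ, true_and] at hC
        rw [← Nat.sub_add_cancel hC.1.card_pos, pow_succ, Nat.add_sub_cancel]
        ring

end ChainSum

theorem stmt14_general [PartialOrder P] [Fintype P] (hw : TwoWide P) (μ : P → ℕ)
    (hμ : ParityRank μ) (hE : DownEulerian μ) (g : P → ℝ) (hg : IsDMF g)
    (b : P) (hb : IsCrit g b) :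
    chainSum (fun C => b ∈ C ∧ ∀ x ∈ C, g x ≤ g b) = (-1 : ℤ) ^ μ b := by
  have hmax : chainSum (fun C => b ∈ C ∧ ∀ x ∈ C, g x ≤ g b) =
      chainSum (fun C => b ∈ C ∧ ∀ x ∈ C, x ≤ b) :=
    chainSum_congr fun C _ hC => and_congr_right fun hbC =>
      forall₂_congr fun x hx => hb.apply_le_iff_le hw hg (hC.total hx hbC)
  rw [hmax, chainSum_mem_and_forall_le]
  by_cases hmin : IsMin b
  · rw [chainSum_eq_zero fun C hne _ hlt => hmin.not_lt (hlt _ hne.choose_spec), hμ.2.1 b hmin]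
    norm_num
  · rw [hE b hmin, pow_succ]
    ring

theorem stmt14 [PartialOrder P] [Fintype P] (hw : TwoWide P) (μ : P → ℕ)
    (hμ : ParityRank μ) (hE : DownEulerian μ) (g : P → ℝ) (hg : IsDMF g)
    (hinj : Function.Injective g)
    (hcond : ∀ z x y w : P, z < x → x ⋖ y → y < w → g x < g y → g z < g y ∧ g x < g w)
    (b : P) (hb : IsCrit g b) :
    chainSum (fun C => b ∈ C ∧ ∀ x ∈ C, g x ≤ g b) = (-1 : ℤ) ^ μ b :=
  stmt14_general hw μ hμ hE g hg b hb
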